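/- For the Levi-Civita connection ∇ of the Mrugala metric G and the frame vector fields ξ = ∂_{x^0}, P_i = ∂_{p_i}, X_i = ∂_{x^i} − p_i ∂_{x^0} on P, one has: ∇_ξ ξ = 0, ∇_{P_i} P_j = 0, ∇_{X_i} X_j = 0, ∇_ξ P_i = ∇_{P_i} ξ = ½ P_i, ∇_ξ X_j = ∇_{X_j} ξ = −½ X_j, ∇_{P_i} X_j = −½ δ_{ij} ξ and ∇_{X_i} P_j = ½ δ_{ij} ξ. -/

import Mathlib

/-!
Statement 4: Covariant derivatives of the frame `ξ = ∂_{x^0}`, `P_i = ∂_{p_i}`,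
`X_i = ∂_{x^i} - p_i ∂_{x^0}` with respect to the Levi-Civita connection of the
Mrugala metric `G`:
`∇_ξ ξ = 0`, `∇_{P_i} P_j = 0`, `∇_{X_i} X_j = 0`,
`∇_ξ P_i = ∇_{P_i} ξ = ½ P_i`, `∇_ξ X_j = ∇_{X_j} ξ = -½ X_j`,
`∇_{P_i} X_j = -½ δ_{ij} ξ`, `∇_{X_i} P_j = ½ δ_{ij} ξ`.
-/

abbrev Idx (n : ℕ) : Type := Unit ⊕ (Fin n ⊕ Fin n)
abbrev Pt (n : ℕ) : Type := Idx n → ℝ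

/-- The Mrugala metric `G = [[1, 0, pᵀ], [0, 0ₙ, Iₙ], [p, Iₙ, p pᵀ]]`. -/
def Gmat (n : ℕ) (m : Pt n) : Matrix (Idx n) (Idx n) ℝ :=
  Matrix.of fun a b =>
    match a, b with
    | Sum.inl _, Sum.inl _ => 1
    | Sum.inl _, Sum.inr (Sum.inl _) => 0
    | Sum.inl _, Sum.inr (Sum.inr j) => m (Sum.inr (Sum.inl j))
    | Sum.inr (Sum.inl _), Sum.inl _ => 0
    | Sum.inr (Sum.inl _), Sum.inr (Sum.inl _) => 0
    | Sum.inr (Sum.inl i), Sum.inr (Sum.inr j) => if i = j then 1 else 0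
    | Sum.inr (Sum.inr i), Sum.inl _ => m (Sum.inr (Sum.inl i))
    | Sum.inr (Sum.inr i), Sum.inr (Sum.inl j) => if i = j then 1 else 0
    | Sum.inr (Sum.inr i), Sum.inr (Sum.inr j) =>
        m (Sum.inr (Sum.inl i)) * m (Sum.inr (Sum.inl j))

/-- Partial derivative `∂_a f (m)` of a scalar function on `P`. -/
noncomputable def pd {n : ℕ} (f : Pt n → ℝ) (m : Pt n) (a : Idx n) : ℝ :=
  fderiv ℝ f m (Pi.single a 1)

/-- Christoffel symbols `Γ^α_{βγ} = ½ Σ_s G^{αs}(∂_β G_{γs} + ∂_γ G_{βs} - ∂_s G_{βγ})`. -/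
noncomputable def Christoffel (n : ℕ) (m : Pt n) (α β γ : Idx n) : ℝ :=
  (1 / 2) * ∑ s, (Gmat n m)⁻¹ α s *
    (pd (fun m' => Gmat n m' γ s) m β + pd (fun m' => Gmat n m' β s) m γ
      - pd (fun m' => Gmat n m' β γ) m s)

/-- Covariant derivative `(∇_Y Z)^α = Y^β ∂_β Z^α + Γ^α_{βγ} Y^β Z^γ`. -/
noncomputable def covDeriv (n : ℕ) (Y Z : Pt n → Pt n) (m : Pt n) : Pt n := fun α =>
  (∑ β, Y m β * pd (fun m' => Z m' α) m β)
    + ∑ β, ∑ γ, Christoffel n m α β γ * Y m β * Z m γ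

/-- The frame field `ξ = ∂_{x^0}`. -/
noncomputable def xiVF (n : ℕ) : Pt n → Pt n := fun _ => Pi.single (Sum.inl ()) 1

/-- The frame field `P_i = ∂_{p_i}`. -/
noncomputable def PVF (n : ℕ) (i : Fin n) : Pt n → Pt n :=
  fun _ => Pi.single (Sum.inr (Sum.inl i)) 1

/-- The frame field `X_i = ∂_{x^i} - p_i ∂_{x^0}`. -/
noncomputable def XVF (n : ℕ) (i : Fin n) : Pt n → Pt n := fun m =>
  (Pi.single (Sum.inr (Sum.inr i)) 1 : Pt n) -
    m (Sum.inr (Sum.inl i)) • (Pi.single (Sum.inl ()) 1 : Pt n)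

/-!
The metric depends on `p` alone, so its only first derivatives are `∂_{p_k} G`, and its inverse
is explicit; this gives the Christoffel symbols on the coordinate frame. The covariant derivative
splits as `∇_Y Z = D_Y Z + Γ(Y, Z)`, where `D_Y` differentiates the components of `Z` along `Y`
and `Γ` is symmetric and bilinear. Since `ξ` and `P_i` have constant coefficients, `D_Y` kills
them, while `D_Y X_j = -dp_j(Y) ξ`; the frame values of `Γ` follow from the coordinate ones by
bilinearity.
-/

open Sum

section

variable {n : ℕ}

lemma pd_const (c : ℝ) (m : Pt n) (a : Idx n) : pd (fun _ => c) m a = 0 := by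
  simp [pd]

lemma pd_coord (b : Idx n) (m : Pt n) (a : Idx n) :
    pd (fun m' : Pt n => m' b) m a = if b = a then 1 else 0 := by
  simp [pd, (hasFDerivAt_apply b m).fderiv, Pi.single_apply]

lemma pd_mul {f g : Pt n → ℝ} {m : Pt n} (hf : DifferentiableAt ℝ f m)
    (hg : DifferentiableAt ℝ g m) (a : Idx n) :
    pd (fun m' => f m' * g m') m a = pd f m a * g m + f m * pd g m a := by
  simp [pd, fderiv_fun_mul hf hg]
  ring

lemma pd_sub {f g : Pt n → ℝ} {m : Pt n} (hf : DifferentiableAt ℝ f m)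
    (hg : DifferentiableAt ℝ g m) (a : Idx n) :
    pd (fun m' => f m' - g m') m a = pd f m a - pd g m a := by
  simp [pd, fderiv_fun_sub hf hg]

lemma Gmat_apply_comm (m : Pt n) (a b : Idx n) : Gmat n m a b = Gmat n m b a := by
  rcases a with _ | a | a <;> rcases b with _ | b | b <;> simp [Gmat, eq_comm, mul_comm]

/-- `dGmat m a b c = ∂_a G_{bc}(m)`. -/
def dGmat (m : Pt n) (a b c : Idx n) : ℝ :=
  match a, b, c with
  | inr (inl k), inl _, inr (inr j) => if j = k then 1 else 0
  | inr (inl k), inr (inr i), inl _ => if i = k then 1 else 0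
  | inr (inl k), inr (inr i), inr (inr j) =>
      (if i = k then 1 else 0) * m (inr (inl j)) + m (inr (inl i)) * if j = k then 1 else 0
  | _, _, _ => 0

lemma pd_Gmat (m : Pt n) (a b c : Idx n) : pd (fun m' => Gmat n m' b c) m a = dGmat m a b c := by
  rcases b with _ | b | b <;> rcases c with _ | c | c <;> rcases a with _ | a | a <;>
    simp [Gmat, dGmat, pd_const, pd_coord, pd_mul, differentiableAt_apply]

def GmatInv (n : ℕ) (m : Pt n) : Matrix (Idx n) (Idx n) ℝ :=
  Matrix.of fun a b =>
    match a, b with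
    | inl _, inl _ => 1
    | inl _, inr (inl j) => -m (inr (inl j))
    | inl _, inr (inr _) => 0
    | inr (inl i), inl _ => -m (inr (inl i))
    | inr (inl _), inr (inl _) => 0
    | inr (inl i), inr (inr j) => if i = j then 1 else 0
    | inr (inr _), inl _ => 0
    | inr (inr i), inr (inl j) => if i = j then 1 else 0
    | inr (inr _), inr (inr _) => 0

lemma Gmat_mul_GmatInv (m : Pt n) : Gmat n m * GmatInv n m = 1 := by
  ext (_ | a | a) (_ | b | b) <;>
    simp [Matrix.mul_apply, Fintype.sum_sum_type, Gmat, GmatInv, Matrix.one_apply, mul_comm]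

lemma Gmat_inv (m : Pt n) : (Gmat n m)⁻¹ = GmatInv n m :=
  Matrix.inv_eq_right_inv (Gmat_mul_GmatInv m)

lemma christoffel_eq_sum (m : Pt n) (α β γ : Idx n) :
    Christoffel n m α β γ =
      (1 / 2) * ∑ s, GmatInv n m α s * (dGmat m β γ s + dGmat m γ β s - dGmat m s β γ) := by
  simp only [Christoffel, Gmat_inv, pd_Gmat]

lemma christoffel_comm (m : Pt n) (α β γ : Idx n) :
    Christoffel n m α β γ = Christoffel n m α γ β := by
  have hG : (fun m' => Gmat n m' β γ) = fun m' => Gmat n m' γ β :=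
    funext fun m' => Gmat_apply_comm m' β γ
  simp only [Christoffel, hG, add_comm (pd (fun m' => Gmat n m' γ _) m β)]

noncomputable def christoffelForm (n : ℕ) (m : Pt n) : Pt n →ₗ[ℝ] Pt n →ₗ[ℝ] Pt n :=
  LinearMap.mk₂ ℝ (fun u v α => ∑ β, ∑ γ, Christoffel n m α β γ * u β * v γ)
    (fun _ _ _ => by ext; simp only [Pi.add_apply, mul_add, add_mul, Finset.sum_add_distrib])
    (fun _ _ _ => by
      ext; simp only [Pi.smul_apply, smul_eq_mul, Finset.mul_sum, mul_comm, mul_left_comm])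
    (fun _ _ _ => by ext; simp only [Pi.add_apply, mul_add, Finset.sum_add_distrib])
    (fun _ _ _ => by
      ext; simp only [Pi.smul_apply, smul_eq_mul, Finset.mul_sum, mul_comm, mul_left_comm])

lemma christoffelForm_comm (m u v : Pt n) : christoffelForm n m u v = christoffelForm n m v u := by
  ext α
  simp only [christoffelForm, LinearMap.mk₂_apply]
  rw [Finset.sum_comm]
  simp only [christoffel_comm m α, mul_right_comm]

lemma christoffelForm_single (m : Pt n) (β γ : Idx n) :
    christoffelForm n m (Pi.single β 1) (Pi.single γ 1) = fun α => Christoffel n m α β γ := by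
  ext α
  simp only [christoffelForm, LinearMap.mk₂_apply, Pi.single_apply, mul_ite, mul_one, mul_zero,
    Finset.sum_ite_eq', Finset.mem_univ, if_true]

lemma covDeriv_const_right (m : Pt n) (Y : Pt n → Pt n) (v : Pt n) :
    covDeriv n Y (fun _ => v) m = christoffelForm n m (Y m) v := by
  ext α
  simp only [covDeriv, pd_const, mul_zero, Finset.sum_const_zero, zero_add]
  rfl

lemma covDeriv_XVF_right (m : Pt n) (Y : Pt n → Pt n) (j : Fin n) :
    covDeriv n Y (XVF n j) m =
      christoffelForm n m (Y m) (XVF n j m) - Y m (inr (inl j)) • xiVF n m := by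
  ext α
  have hpd (β : Idx n) : pd (fun m' => XVF n j m' α) m β =
      -((if inr (inl j) = β then 1 else 0) * (Pi.single (inl ()) 1 : Pt n) α) := by
    simp [XVF, pd_sub, pd_mul, pd_const, pd_coord, differentiableAt_apply]
  simp [covDeriv, christoffelForm, hpd, xiVF, Pi.single_apply]
  ring

local notation "∂x[" i "]" => (Pi.single (inr (inr i)) 1 : Pt _)

section CoordinateFrame

variable (m : Pt n)

attribute [local simp] xiVF PVF christoffelForm_single christoffel_eq_sum GmatInv dGmat
  Fintype.sum_sum_type Pi.single_apply ite_apply mul_add mul_ite Finset.sum_add_distrib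

lemma christoffelForm_xi_xi : christoffelForm n m (xiVF n m) (xiVF n m) = 0 := by
  ext (_ | k | k) <;> simp

lemma christoffelForm_xi_P (i : Fin n) :
    christoffelForm n m (xiVF n m) (PVF n i m) = (1 / 2 : ℝ) • PVF n i m := by
  ext (_ | k | k) <;> simp

lemma christoffelForm_P_P (i j : Fin n) : christoffelForm n m (PVF n i m) (PVF n j m) = 0 := by
  ext (_ | k | k) <;> simp

lemma christoffelForm_xi_x (j : Fin n) :
    christoffelForm n m (xiVF n m) ∂x[j] =
      (m (inr (inl j)) / 2) • xiVF n m - (1 / 2 : ℝ) • ∂x[j] := by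
  ext (_ | k | k) <;> simp
  grind

lemma christoffelForm_P_x (i j : Fin n) :
    christoffelForm n m (PVF n i m) ∂x[j] =
      ((1 / 2 : ℝ) * if i = j then 1 else 0) • xiVF n m + (m (inr (inl j)) / 2) • PVF n i m := by
  ext (_ | k | k) <;> simp <;> grind

lemma christoffelForm_x_x (i j : Fin n) :
    christoffelForm n m ∂x[i] ∂x[j] = (m (inr (inl i)) * m (inr (inl j))) • xiVF n m
      - (m (inr (inl j)) / 2) • ∂x[i] - (m (inr (inl i)) / 2) • ∂x[j] := by
  ext (_ | k | k) <;> simp <;> grind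

end CoordinateFrame

section Frame

variable (m : Pt n)

lemma XVF_eq (j : Fin n) : XVF n j m = ∂x[j] - m (inr (inl j)) • xiVF n m := rfl

lemma christoffelForm_xi_X (j : Fin n) :
    christoffelForm n m (xiVF n m) (XVF n j m) = -((1 / 2 : ℝ) • XVF n j m) := by
  rw [XVF_eq, map_sub, map_smul, christoffelForm_xi_x, christoffelForm_xi_xi]
  module

lemma christoffelForm_P_X (i j : Fin n) :
    christoffelForm n m (PVF n i m) (XVF n j m) =
      ((1 / 2 : ℝ) * if i = j then 1 else 0) • xiVF n m := by
  rw [XVF_eq, map_sub, map_smul, christoffelForm_P_x, christoffelForm_comm m (PVF n i m),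
    christoffelForm_xi_P]
  module

lemma christoffelForm_X_X (i j : Fin n) : christoffelForm n m (XVF n i m) (XVF n j m) = 0 := by
  simp only [XVF_eq, map_sub, map_smul, LinearMap.sub_apply, LinearMap.smul_apply,
    christoffelForm_x_x, christoffelForm_comm m ∂x[i] (xiVF n m), christoffelForm_xi_x,
    christoffelForm_xi_xi]
  module

end Frame

end

theorem mrugala_levi_civita_frame_general (n : ℕ) (m : Pt n) (i j : Fin n) :
    covDeriv n (xiVF n) (xiVF n) m = 0 ∧
    covDeriv n (PVF n i) (PVF n j) m = 0 ∧
    covDeriv n (XVF n i) (XVF n j) m = 0 ∧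
    covDeriv n (xiVF n) (PVF n i) m = (1 / 2 : ℝ) • PVF n i m ∧
    covDeriv n (PVF n i) (xiVF n) m = (1 / 2 : ℝ) • PVF n i m ∧
    covDeriv n (xiVF n) (XVF n j) m = -((1 / 2 : ℝ) • XVF n j m) ∧
    covDeriv n (XVF n j) (xiVF n) m = -((1 / 2 : ℝ) • XVF n j m) ∧
    covDeriv n (PVF n i) (XVF n j) m =
      -(((1 / 2 : ℝ) * if i = j then 1 else 0) • xiVF n m) ∧
    covDeriv n (XVF n i) (PVF n j) m =
      ((1 / 2 : ℝ) * if i = j then 1 else 0) • xiVF n m := by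
  have hxi (Y : Pt n → Pt n) : covDeriv n Y (xiVF n) m = christoffelForm n m (Y m) (xiVF n m) :=
    covDeriv_const_right m Y _
  have hP (Y : Pt n → Pt n) (k : Fin n) :
      covDeriv n Y (PVF n k) m = christoffelForm n m (Y m) (PVF n k m) :=
    covDeriv_const_right m Y _
  refine ⟨?_, ?_, ?_, ?_, ?_, ?_, ?_, ?_, ?_⟩
  · rw [hxi, christoffelForm_xi_xi]
  · rw [hP, christoffelForm_P_P]
  · rw [covDeriv_XVF_right, christoffelForm_X_X]
    simp [XVF]
  · rw [hP, christoffelForm_xi_P]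
  · rw [hxi, christoffelForm_comm, christoffelForm_xi_P]
  · rw [covDeriv_XVF_right, christoffelForm_xi_X]
    simp [xiVF]
  · rw [hxi, christoffelForm_comm, christoffelForm_xi_X]
  · have hδ : PVF n i m (inr (inl j)) = if i = j then 1 else 0 := by
      simp [PVF, Pi.single_apply, eq_comm]
    rw [covDeriv_XVF_right, christoffelForm_P_X, hδ]
    module
  · rw [hP, christoffelForm_comm, christoffelForm_P_X]
    simp_rw [eq_comm (a := j)]

theorem mrugala_levi_civita_frame (n : ℕ) (hn : 1 ≤ n) (m : Pt n) (i j : Fin n) :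
    covDeriv n (xiVF n) (xiVF n) m = 0 ∧
    covDeriv n (PVF n i) (PVF n j) m = 0 ∧
    covDeriv n (XVF n i) (XVF n j) m = 0 ∧
    covDeriv n (xiVF n) (PVF n i) m = (1 / 2 : ℝ) • PVF n i m ∧
    covDeriv n (PVF n i) (xiVF n) m = (1 / 2 : ℝ) • PVF n i m ∧
    covDeriv n (xiVF n) (XVF n j) m = -((1 / 2 : ℝ) • XVF n j m) ∧
    covDeriv n (XVF n j) (xiVF n) m = -((1 / 2 : ℝ) • XVF n j m) ∧
    covDeriv n (PVF n i) (XVF n j) m =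
      -(((1 / 2 : ℝ) * if i = j then 1 else 0) • xiVF n m) ∧
    covDeriv n (XVF n i) (PVF n j) m =
      ((1 / 2 : ℝ) * if i = j then 1 else 0) • xiVF n m :=
  mrugala_levi_civita_frame_general n m i j
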